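/- Let △ be a continuous t-norm on I = [0,1], ▽ a continuous t-conorm on I, and ⋆ a continuous binary operation on I. Then the following are equivalent: (1) ⋆ is a t-norm on I; (2) the convolution ⋏ is a t-norm on L; (3) the convolution ⋎ is a t-conorm on L. -/
import Mathlib


open unitInterval

noncomputable section

instance : Fact ((0:ℝ) ≤ 1) := ⟨zero_le_one⟩

/-- A function `f : I → I` is normal if `sup {f x : x ∈ I} = 1`. -/
def IsNormal (f : I → I) : Prop := sSup (Set.range f) = 1

/-- A function `f : I → I` is convex if `f y ≥ min (f x) (f z)` whenever `x ≤ y ≤ z`. -/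
def IsConvexFn (f : I → I) : Prop :=
  ∀ x y z : I, x ≤ y → y ≤ z → min (f x) (f z) ≤ f y

/-- Membership in `L`, the set of normal convex functions from `I` to `I`. -/
def InL (f : I → I) : Prop := IsNormal f ∧ IsConvexFn f

/-- A t-norm on `I`: commutative, associative, increasing in each argument,
with neutral element `1`. -/
def IsTnorm (op : I → I → I) : Prop :=
  (∀ x y : I, op x y = op y x) ∧
  (∀ x y z : I, op (op x y) z = op x (op y z)) ∧
  (∀ y : I, Monotone fun x => op x y) ∧
  (∀ x : I, Monotone fun y => op x y) ∧
  (∀ x : I, op 1 x = x) ∧ (∀ x : I, op x 1 = x)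

/-- A t-conorm on `I`: commutative, associative, increasing in each argument,
with neutral element `0`. -/
def IsTconorm (op : I → I → I) : Prop :=
  (∀ x y : I, op x y = op y x) ∧
  (∀ x y z : I, op (op x y) z = op x (op y z)) ∧
  (∀ y : I, Monotone fun x => op x y) ∧
  (∀ x : I, Monotone fun y => op x y) ∧
  (∀ x : I, op 0 x = x) ∧ (∀ x : I, op x 0 = x)

/-- Continuity of a binary operation on `I`, as a map `I × I → I`. -/
def IsCont (op : I → I → I) : Prop := Continuous fun p : I × I => op p.1 p.2

/-- The convolution `(f ⋏ g)(x) = sup {f y ⋆ g z : y △ z = x}` (`star` playing the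
role of `⋆` and `tri` the role of `△`); the sup of the empty set is `0`. -/
def conv (star tri : I → I → I) (f g : I → I) : I → I :=
  fun x => sSup {a : I | ∃ y z : I, tri y z = x ∧ a = star (f y) (g z)}

/-- The meet `(f ⊓ g)(x) = sup {min (f y) (g z) : min y z = x}`. -/
def fmeet (f g : I → I) : I → I :=
  fun x => sSup {a : I | ∃ y z : I, min y z = x ∧ a = min (f y) (g z)}

/-- The partial order `f ⊑ g` iff `f ⊓ g = f`. -/
def sqle (f g : I → I) : Prop := fmeet f g = f

/-- The characteristic function `χ_{x}` of the singleton `{x}`. -/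
def chi (x : I) : I → I := fun t => if t = x then 1 else 0

/-- A binary operation `C` on functions is a t-norm on `L` if `L` is closed under `C` and,
on `L`, `C` is commutative, associative, has `χ_{1}` as neutral element, and is increasing
in each argument with respect to `⊑`. -/
def IsTnormOnL (C : (I → I) → (I → I) → (I → I)) : Prop :=
  (∀ f g, InL f → InL g → InL (C f g)) ∧
  (∀ f g, InL f → InL g → C f g = C g f) ∧
  (∀ f g h, InL f → InL g → InL h → C (C f g) h = C f (C g h)) ∧
  (∀ f, InL f → C f (chi 1) = f) ∧
  (∀ f g h, InL f → InL g → InL h → sqle g h → sqle (C f g) (C f h))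

/-- A binary operation `C` on functions is a t-conorm on `L` if `L` is closed under `C` and,
on `L`, `C` is commutative, associative, has `χ_{0}` as neutral element, and is increasing
in each argument with respect to `⊑`. -/
def IsTconormOnL (C : (I → I) → (I → I) → (I → I)) : Prop :=
  (∀ f g, InL f → InL g → InL (C f g)) ∧
  (∀ f g, InL f → InL g → C f g = C g f) ∧
  (∀ f g h, InL f → InL g → InL h → C (C f g) h = C f (C g h)) ∧
  (∀ f, InL f → C f (chi 0) = f) ∧
  (∀ f g h, InL f → InL g → InL h → sqle g h → sqle (C f g) (C f h))

/-- `f^L (x) = sup {f y : y ≤ x}`. -/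
def fL (f : I → I) : I → I := fun x => sSup (f '' Set.Iic x)

/-- `f^R (x) = sup {f y : y ≥ x}`. -/
def fR (f : I → I) : I → I := fun x => sSup (f '' Set.Ici x)

/-- The function `V_x (t) = (x - 1) * t + 1`. -/
def Vfn (x : I) : I → I := fun t =>
  ⟨(x.1 - 1) * t.1 + 1, by
    obtain ⟨hx0, hx1⟩ := x.2; obtain ⟨ht0, ht1⟩ := t.2
    constructor <;> nlinarith⟩

section AuxProofs

variable {star op : I → I → I}

lemma I_le_one (x : I) : x ≤ 1 := le_one x
lemma I_nonneg (x : I) : (0:I) ≤ x := nonneg x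

lemma sSup_map (φ : I → I) (hm : Monotone φ) (hc : Continuous φ) {s : Set I}
    (h : s.Nonempty) : φ (sSup s) = sSup (φ '' s) := by
  apply le_antisymm
  · have h1 : sSup s ∈ closure s := sSup_mem_closure h
    have h2 : φ (sSup s) ∈ closure (φ '' s) :=
      (image_closure_subset_closure_image hc) (Set.mem_image_of_mem φ h1)
    have h3 : closure (φ '' s) ⊆ Set.Iic (sSup (φ '' s)) :=
      isClosed_Iic.closure_subset_iff.mpr
        (fun a ⟨x, hx, hfx⟩ => hfx ▸ le_sSup (Set.mem_image_of_mem φ hx))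
    exact h3 h2
  · exact sSup_le (fun a ⟨x, hx, hfx⟩ => hfx ▸ hm (le_sSup hx))

lemma cont_left (hc : IsCont op) (c : I) : Continuous fun a => op a c :=
  hc.comp (continuous_id.prodMk continuous_const)

lemma cont_right (hc : IsCont op) (a : I) : Continuous fun c => op a c :=
  hc.comp (continuous_const.prodMk continuous_id)

lemma conv_def (f g : I → I) (x : I) :
    conv star op f g x = sSup {a : I | ∃ y z : I, op y z = x ∧ a = star (f y) (g z)} := rfl

lemma le_conv {f g : I → I} {x y z : I} (h : op y z = x) :
    star (f y) (g z) ≤ conv star op f g x := le_sSup ⟨y, z, h, rfl⟩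

lemma conv_le {f g : I → I} {x : I} {c : I}
    (h : ∀ y z, op y z = x → star (f y) (g z) ≤ c) : conv star op f g x ≤ c :=
  sSup_le (by rintro a ⟨y, z, hyz, rfl⟩; exact h y z hyz)

lemma convSet_nonempty {f g : I → I} {e : I} (hue : ∀ x, op x e = x) (x : I) :
    {a : I | ∃ y z : I, op y z = x ∧ a = star (f y) (g z)}.Nonempty :=
  ⟨star (f x) (g e), x, e, hue x, rfl⟩

lemma ivt2 (hoc : IsCont op) {y a b x : I} (h1 : op y a ≤ x) (h2 : x ≤ op y b) :
    ∃ z ∈ Set.uIcc a b, op y z = x := by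
  have hc : ContinuousOn (fun z => op y z) (Set.uIcc a b) := (cont_right hoc y).continuousOn
  have hx : x ∈ Set.uIcc (op y a) (op y b) := Set.mem_uIcc.mpr (Or.inl ⟨h1, h2⟩)
  obtain ⟨z, hz, hzx⟩ := intermediate_value_uIcc hc hx
  exact ⟨z, hz, hzx⟩

lemma ivt1 (hoc : IsCont op) {a b z x : I} (h1 : op a z ≤ x) (h2 : x ≤ op b z) :
    ∃ y ∈ Set.uIcc a b, op y z = x := by
  have hc : ContinuousOn (fun y => op y z) (Set.uIcc a b) := (cont_left hoc z).continuousOn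
  have hx : x ∈ Set.uIcc (op a z) (op b z) := Set.mem_uIcc.mpr (Or.inl ⟨h1, h2⟩)
  obtain ⟨y, hy, hyx⟩ := intermediate_value_uIcc hc hx
  exact ⟨y, hy, hyx⟩

lemma convexFn_uIcc {g : I → I} (hg : IsConvexFn g) {a b z : I} (hz : z ∈ Set.uIcc a b) :
    min (g a) (g b) ≤ g z := by
  rcases le_total a b with h | h
  · rw [Set.uIcc_of_le h] at hz; exact hg a z b hz.1 hz.2
  · rw [Set.uIcc_of_ge h] at hz
    have := hg b z a hz.1 hz.2; rwa [min_comm] at this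

lemma conv_convex_core (hsm1 : ∀ c : I, Monotone fun a => star a c)
    (hsm2 : ∀ a : I, Monotone (star a)) (hoc : IsCont op)
    {f g : I → I} (hf : IsConvexFn f) (hg : IsConvexFn g)
    {x1 x2 x3 y1 z1 y3 z3 : I} (h12 : x1 ≤ x2) (h23 : x2 ≤ x3)
    (e1 : op y1 z1 = x1) (e3 : op y3 z3 = x3) :
    ∃ y z : I, op y z = x2 ∧
      min (star (f y1) (g z1)) (star (f y3) (g z3)) ≤ star (f y) (g z) := by
  rcases le_total (f y1) (f y3) with hm | hm
  · have hS31 : star (f y1) (g z1) ≤ star (f y3) (g z1) := hsm1 (g z1) hm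
    rcases le_total x2 (op y3 z1) with hx | hx
    · obtain ⟨y2, hy2, hy2x⟩ := ivt1 hoc (le_trans (le_of_eq e1) h12) hx
      refine ⟨y2, z1, hy2x, ?_⟩
      have h1 : min (f y1) (f y3) ≤ f y2 := convexFn_uIcc hf hy2
      have h2 : star (min (f y1) (f y3)) (g z1) ≤ star (f y2) (g z1) := hsm1 _ h1
      rw [min_eq_left hm] at h2
      exact le_trans (min_le_left _ _) h2
    · obtain ⟨z2, hz2, hz2x⟩ := ivt2 hoc hx (le_trans h23 (le_of_eq e3.symm))
      refine ⟨y3, z2, hz2x, ?_⟩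
      have h1 : min (g z1) (g z3) ≤ g z2 := convexFn_uIcc hg hz2
      have h2 : star (f y3) (min (g z1) (g z3)) ≤ star (f y3) (g z2) := hsm2 _ h1
      rcases le_total (g z1) (g z3) with h3 | h3
      · rw [min_eq_left h3] at h2
        exact le_trans (le_trans (min_le_left _ _) hS31) h2
      · rw [min_eq_right h3] at h2
        exact le_trans (min_le_right _ _) h2
  · have hS13 : star (f y3) (g z3) ≤ star (f y1) (g z3) := hsm1 (g z3) hm
    rcases le_total x2 (op y1 z3) with hx | hx
    · obtain ⟨z2, hz2, hz2x⟩ := ivt2 hoc (le_trans (le_of_eq e1) h12) hx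
      refine ⟨y1, z2, hz2x, ?_⟩
      have h1 : min (g z1) (g z3) ≤ g z2 := convexFn_uIcc hg hz2
      have h2 : star (f y1) (min (g z1) (g z3)) ≤ star (f y1) (g z2) := hsm2 _ h1
      rcases le_total (g z1) (g z3) with h3 | h3
      · rw [min_eq_left h3] at h2
        exact le_trans (min_le_left _ _) h2
      · rw [min_eq_right h3] at h2
        exact le_trans (le_trans (min_le_right _ _) hS13) h2
    · obtain ⟨y2, hy2, hy2x⟩ := ivt1 hoc hx (le_trans h23 (le_of_eq e3.symm))
      refine ⟨y2, z3, hy2x, ?_⟩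
      have h1 : min (f y1) (f y3) ≤ f y2 := convexFn_uIcc hf hy2
      have h2 : star (min (f y1) (f y3)) (g z3) ≤ star (f y2) (g z3) := hsm1 _ h1
      rw [min_eq_right hm] at h2
      exact le_trans (min_le_right _ _) h2

lemma conv_convex (hsm1 : ∀ c : I, Monotone fun a => star a c)
    (hsm2 : ∀ a : I, Monotone (star a)) (hoc : IsCont op)
    {e : I} (hue : ∀ x, op x e = x)
    {f g : I → I} (hf : IsConvexFn f) (hg : IsConvexFn g) :
    IsConvexFn (conv star op f g) := by
  intro x1 x2 x3 h12 h23
  have E1 : min (conv star op f g x1) (conv star op f g x3)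
      = sSup ((fun t => min t (conv star op f g x3)) ''
        {a : I | ∃ y z : I, op y z = x1 ∧ a = star (f y) (g z)}) :=
    sSup_map _ (fun a b h => min_le_min h le_rfl)
      (continuous_id.min continuous_const) (convSet_nonempty hue x1)
  rw [E1]
  apply sSup_le
  rintro _ ⟨_, ⟨y1, z1, e1, rfl⟩, rfl⟩
  have E2 : min (star (f y1) (g z1)) (conv star op f g x3)
      = sSup ((fun t => min (star (f y1) (g z1)) t) ''
        {a : I | ∃ y z : I, op y z = x3 ∧ a = star (f y) (g z)}) :=
    sSup_map _ (fun a b h => min_le_min le_rfl h)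
      (continuous_const.min continuous_id) (convSet_nonempty hue x3)
  dsimp only
  rw [E2]
  apply sSup_le
  rintro _ ⟨_, ⟨y3, z3, e3, rfl⟩, rfl⟩
  dsimp only
  obtain ⟨y, z, hyz, hle⟩ := conv_convex_core hsm1 hsm2 hoc hf hg h12 h23 e1 e3
  exact le_trans hle (le_conv hyz)

lemma conv_normal (hsm1 : ∀ c : I, Monotone fun a => star a c)
    (hsm2 : ∀ a : I, Monotone (star a)) (hstarc : IsCont star)
    (hs11 : star 1 1 = 1) {f g : I → I} (hf : IsNormal f) (hg : IsNormal g) :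
    IsNormal (conv star op f g) := by
  apply le_antisymm (sSup_le fun a _ => I_le_one a)
  have e1 : star (sSup (Set.range f)) (sSup (Set.range g))
      = sSup ((fun a => star a (sSup (Set.range g))) '' Set.range f) :=
    sSup_map _ (hsm1 _) (cont_left hstarc _) (Set.range_nonempty f)
  have key : star (sSup (Set.range f)) (sSup (Set.range g))
      ≤ sSup (Set.range (conv star op f g)) := by
    rw [e1]
    apply sSup_le
    rintro _ ⟨_, ⟨y, rfl⟩, rfl⟩
    have e2 : star (f y) (sSup (Set.range g)) = sSup ((fun b => star (f y) b) '' Set.range g) :=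
      sSup_map _ (hsm2 _) (cont_right hstarc _) (Set.range_nonempty g)
    dsimp only
    rw [e2]
    apply sSup_le
    rintro _ ⟨_, ⟨z, rfl⟩, rfl⟩
    dsimp only
    exact le_trans (le_conv rfl) (le_sSup ⟨op y z, rfl⟩)
  rw [hf, hg, hs11] at key
  exact key

lemma conv_comm (hscomm : ∀ a b : I, star a b = star b a)
    (hocomm : ∀ a b : I, op a b = op b a) (f g : I → I) :
    conv star op f g = conv star op g f := by
  funext x
  rw [conv_def, conv_def]
  congr 1
  ext a
  constructor
  · rintro ⟨y, z, h, rfl⟩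
    exact ⟨z, y, by rw [hocomm]; exact h, hscomm _ _⟩
  · rintro ⟨y, z, h, rfl⟩
    exact ⟨z, y, by rw [hocomm]; exact h, hscomm _ _⟩

lemma conv_assoc (hsa : ∀ a b c : I, star (star a b) c = star a (star b c))
    (hsm1 : ∀ c : I, Monotone fun a => star a c)
    (hsm2 : ∀ a : I, Monotone (star a)) (hstarc : IsCont star)
    (hoassoc : ∀ a b c : I, op (op a b) c = op a (op b c))
    {e : I} (hue : ∀ x, op x e = x) (f g h : I → I) :
    conv star op (conv star op f g) h = conv star op f (conv star op g h) := by
  funext x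
  apply le_antisymm
  · apply conv_le; intro u w huw
    have E : star (conv star op f g u) (h w)
        = sSup ((fun a => star a (h w)) '' {a : I | ∃ y z : I, op y z = u ∧ a = star (f y) (g z)}) :=
      sSup_map _ (hsm1 _) (cont_left hstarc _) (convSet_nonempty hue u)
    rw [E]
    apply sSup_le
    rintro _ ⟨_, ⟨y, z, hyz, rfl⟩, rfl⟩
    dsimp only
    calc star (star (f y) (g z)) (h w) = star (f y) (star (g z) (h w)) := hsa _ _ _
      _ ≤ star (f y) (conv star op g h (op z w)) := hsm2 _ (le_conv rfl)
      _ ≤ conv star op f (conv star op g h) x := le_conv (by rw [← hoassoc, hyz, huw])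
  · apply conv_le; intro y u hyu
    have E : star (f y) (conv star op g h u)
        = sSup ((fun b => star (f y) b) '' {a : I | ∃ z w : I, op z w = u ∧ a = star (g z) (h w)}) :=
      sSup_map _ (hsm2 _) (cont_right hstarc _) (convSet_nonempty hue u)
    rw [E]
    apply sSup_le
    rintro _ ⟨_, ⟨z, w, hzw, rfl⟩, rfl⟩
    dsimp only
    calc star (f y) (star (g z) (h w)) = star (star (f y) (g z)) (h w) := (hsa _ _ _).symm
      _ ≤ star (conv star op f g (op y z)) (h w) := hsm1 _ (le_conv rfl)
      _ ≤ conv star op (conv star op f g) h x := le_conv (by rw [hoassoc, hzw, hyu])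

lemma conv_chi (hsu2 : ∀ a : I, star a 1 = a) (hs0 : ∀ a : I, star a 0 = 0)
    {e : I} (hue : ∀ x, op x e = x) (f : I → I) :
    conv star op f (chi e) = f := by
  funext x
  apply le_antisymm
  · apply conv_le; intro y z hyz
    by_cases hz : z = e
    · subst hz
      rw [show chi z z = 1 by simp [chi], hsu2]
      rw [hue] at hyz
      exact le_of_eq (by rw [hyz])
    · rw [show chi e z = 0 by simp [chi, hz], hs0]
      exact I_nonneg _
  · have h := le_conv (star := star) (op := op) (f := f) (g := chi e) (hue x)
    rwa [show chi e e = 1 by simp [chi], hsu2] at h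

lemma le_fL (f : I → I) {x y : I} (h : y ≤ x) : f y ≤ fL f x := le_sSup ⟨y, h, rfl⟩

lemma le_fR (f : I → I) {x y : I} (h : x ≤ y) : f y ≤ fR f x := le_sSup ⟨y, h, rfl⟩

lemma fL_mono (f : I → I) : Monotone (fL f) := fun _ _ hab =>
  sSup_le (by rintro _ ⟨y, hy, rfl⟩; exact le_fL f (le_trans hy hab))

lemma fR_anti (f : I → I) : Antitone (fR f) := fun _ _ hab =>
  sSup_le (by rintro _ ⟨y, hy, rfl⟩; exact le_fR f (le_trans hab hy))

lemma min_fLfR_le {f : I → I} (hf : IsConvexFn f) (x : I) : min (fL f x) (fR f x) ≤ f x := by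
  have h1 : min (fL f x) (fR f x)
      = sSup ((fun t => min t (fR f x)) '' (f '' Set.Iic x)) :=
    sSup_map _ (fun a b h => min_le_min h le_rfl) (continuous_id.min continuous_const)
      ⟨f x, x, by simp, rfl⟩
  rw [h1]
  apply sSup_le
  rintro _ ⟨_, ⟨y, hy, rfl⟩, rfl⟩
  dsimp only
  have h2 : min (f y) (fR f x) = sSup ((fun t => min (f y) t) '' (f '' Set.Ici x)) :=
    sSup_map _ (fun a b h => min_le_min le_rfl h) (continuous_const.min continuous_id)
      ⟨f x, x, by simp, rfl⟩
  rw [h2]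
  apply sSup_le
  rintro _ ⟨_, ⟨z, hz, rfl⟩, rfl⟩
  exact hf y x z hy hz

lemma one_le_max_fLfR {f : I → I} (hf : IsNormal f) (x : I) :
    (1:I) ≤ max (fL f x) (fR f x) := by
  have h : sSup (Set.range f) ≤ max (fL f x) (fR f x) := by
    apply sSup_le
    rintro _ ⟨y, rfl⟩
    rcases le_total y x with h | h
    · exact le_trans (le_fL f h) (le_max_left _ _)
    · exact le_trans (le_fR f h) (le_max_right _ _)
  rwa [hf] at h

lemma fmeet_eq (f g : I → I) (x : I) :
    fmeet f g x = max (min (f x) (fR g x)) (min (fR f x) (g x)) := by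
  apply le_antisymm
  · apply sSup_le
    rintro _ ⟨y, z, hyz, rfl⟩
    have hxy : x ≤ y := by rw [← hyz]; exact min_le_left y z
    have hxz : x ≤ z := by rw [← hyz]; exact min_le_right y z
    rcases le_total y z with h | h
    · have hy : y = x := by rw [← hyz, min_eq_left h]
      subst hy
      exact le_trans (min_le_min le_rfl (le_fR g hxz)) (le_max_left _ _)
    · have hz : z = x := by rw [← hyz, min_eq_right h]
      subst hz
      exact le_trans (min_le_min (le_fR f hxy) le_rfl) (le_max_right _ _)
  · apply max_le
    · have h1 : min (f x) (fR g x) = sSup ((fun t => min (f x) t) '' (g '' Set.Ici x)) :=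
        sSup_map _ (fun a b h => min_le_min le_rfl h) (continuous_const.min continuous_id)
          ⟨g x, x, by simp, rfl⟩
      rw [h1]
      apply sSup_le
      rintro _ ⟨_, ⟨z, hz, rfl⟩, rfl⟩
      exact le_sSup ⟨x, z, min_eq_left hz, rfl⟩
    · have h1 : min (fR f x) (g x) = sSup ((fun t => min t (g x)) '' (f '' Set.Ici x)) :=
        sSup_map _ (fun a b h => min_le_min h le_rfl) (continuous_id.min continuous_const)
          ⟨f x, x, by simp, rfl⟩
      rw [h1]
      apply sSup_le
      rintro _ ⟨_, ⟨y, hy, rfl⟩, rfl⟩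
      exact le_sSup ⟨y, x, min_eq_right hy, rfl⟩

lemma sqle_iff (f g : I → I) (hfc : IsConvexFn f) (hfn : IsNormal f) :
    sqle f g ↔ (∀ x, fL g x ≤ fL f x) ∧ (∀ x, fR f x ≤ fR g x) := by
  constructor
  · intro h
    have hx : ∀ x, max (min (f x) (fR g x)) (min (fR f x) (g x)) = f x := by
      intro x
      rw [← fmeet_eq]
      exact congrFun h x
    have ha : ∀ x, min (fR f x) (g x) ≤ f x := by
      intro x
      have := le_max_right (min (f x) (fR g x)) (min (fR f x) (g x))
      rwa [hx x] at this
    have hb : ∀ x, f x ≤ fR g x := by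
      intro x
      calc f x = max (min (f x) (fR g x)) (min (fR f x) (g x)) := (hx x).symm
        _ ≤ fR g x := max_le (min_le_right _ _)
            (le_trans (min_le_right _ _) (le_fR g le_rfl))
    constructor
    · intro x
      apply sSup_le
      rintro _ ⟨y, hy, rfl⟩
      rcases le_total (g y) (fR f y) with hc | hc
      · have h2 := ha y
        rw [min_eq_right hc] at h2
        exact le_trans h2 (le_trans (le_fL f le_rfl) (fL_mono f hy))
      · have h1 := one_le_max_fLfR hfn y
        rcases le_max_iff.mp h1 with h2 | h2
        · exact le_trans (I_le_one _) (le_trans h2 (fL_mono f hy))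
        · have hc2 : g y ≤ fR f y := le_trans (I_le_one _) h2
          have h3 := ha y
          rw [min_eq_right hc2] at h3
          exact le_trans h3 (le_trans (le_fL f le_rfl) (fL_mono f hy))
    · intro x
      apply sSup_le
      rintro _ ⟨y, hy, rfl⟩
      exact le_trans (hb y) (fR_anti g hy)
  · rintro ⟨h1, h2⟩
    funext x
    rw [fmeet_eq]
    apply le_antisymm
    · apply max_le (min_le_left _ _)
      have hg : g x ≤ fL f x := le_trans (le_fL g le_rfl) (h1 x)
      calc min (fR f x) (g x) ≤ min (fR f x) (fL f x) := min_le_min le_rfl hg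
        _ = min (fL f x) (fR f x) := min_comm _ _
        _ ≤ f x := min_fLfR_le hfc x
    · have h3 : f x ≤ min (f x) (fR g x) :=
        le_min le_rfl (le_trans (le_fR f le_rfl) (h2 x))
      exact le_trans h3 (le_max_left _ _)

lemma convL_eq {e : I} (hue : ∀ x, op x e = x) (f g : I → I) (x : I) :
    fL (conv star op f g) x
      = sSup {a : I | ∃ y z : I, op y z ≤ x ∧ a = star (f y) (g z)} := by
  apply le_antisymm
  · apply sSup_le
    rintro _ ⟨x', hx', rfl⟩
    apply conv_le
    intro y z hyz
    exact le_sSup ⟨y, z, by rw [hyz]; exact hx', rfl⟩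
  · apply sSup_le
    rintro _ ⟨y, z, hle, rfl⟩
    exact le_trans (le_conv rfl) (le_fL _ hle)

lemma convR_eq {e : I} (hue : ∀ x, op x e = x) (f g : I → I) (x : I) :
    fR (conv star op f g) x
      = sSup {a : I | ∃ y z : I, x ≤ op y z ∧ a = star (f y) (g z)} := by
  apply le_antisymm
  · apply sSup_le
    rintro _ ⟨x', hx', rfl⟩
    apply conv_le
    intro y z hyz
    exact le_sSup ⟨y, z, by rw [hyz]; exact hx', rfl⟩
  · apply sSup_le
    rintro _ ⟨y, z, hle, rfl⟩
    exact le_trans (le_conv rfl) (le_fR _ hle)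

lemma conv_sqle_mono (hsm1 : ∀ c : I, Monotone fun a => star a c)
    (hsm2 : ∀ a : I, Monotone (star a)) (hstarc : IsCont star)
    (hs11 : star 1 1 = 1) (hoc : IsCont op)
    (hom1 : ∀ c : I, Monotone fun a => op a c) (hom2 : ∀ a : I, Monotone (op a))
    {e : I} (hue : ∀ x, op x e = x)
    (f g h : I → I) (hf : InL f) (hg : InL g) (hh : InL h) (hgh : sqle g h) :
    sqle (conv star op f g) (conv star op f h) := by
  obtain ⟨hhL, hgR⟩ := (sqle_iff g h hg.2 hg.1).mp hgh
  apply (sqle_iff _ _ (conv_convex hsm1 hsm2 hoc hue hf.2 hg.2)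
    (conv_normal hsm1 hsm2 hstarc hs11 hf.1 hg.1)).mpr
  constructor
  · intro x
    rw [convL_eq hue, convL_eq hue]
    apply sSup_le
    rintro _ ⟨y, z, hle, rfl⟩
    have h1 : star (f y) (h z) ≤ star (fL f y) (fL g z) :=
      le_trans (hsm1 _ (le_fL f le_rfl))
        (le_trans (hsm2 _ (le_fL h le_rfl)) (hsm2 _ (hhL z)))
    refine le_trans h1 ?_
    have E1 : star (fL f y) (fL g z)
        = sSup ((fun a => star a (fL g z)) '' (f '' Set.Iic y)) :=
      sSup_map _ (hsm1 _) (cont_left hstarc _) ⟨f y, y, by simp, rfl⟩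
    rw [E1]
    apply sSup_le
    rintro _ ⟨_, ⟨y', hy', rfl⟩, rfl⟩
    dsimp only
    have E2 : star (f y') (fL g z)
        = sSup ((fun b => star (f y') b) '' (g '' Set.Iic z)) :=
      sSup_map _ (hsm2 _) (cont_right hstarc _) ⟨g z, z, by simp, rfl⟩
    rw [E2]
    apply sSup_le
    rintro _ ⟨_, ⟨z', hz', rfl⟩, rfl⟩
    exact le_sSup ⟨y', z', le_trans (le_trans (hom1 z' hy') (hom2 y hz')) hle, rfl⟩
  · intro x
    rw [convR_eq hue, convR_eq hue]
    apply sSup_le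
    rintro _ ⟨y, z, hge, rfl⟩
    have h1 : star (f y) (g z) ≤ star (fR f y) (fR h z) :=
      le_trans (hsm1 _ (le_fR f le_rfl))
        (le_trans (hsm2 _ (le_fR g le_rfl)) (hsm2 _ (hgR z)))
    refine le_trans h1 ?_
    have E1 : star (fR f y) (fR h z)
        = sSup ((fun a => star a (fR h z)) '' (f '' Set.Ici y)) :=
      sSup_map _ (hsm1 _) (cont_left hstarc _) ⟨f y, y, by simp, rfl⟩
    rw [E1]
    apply sSup_le
    rintro _ ⟨_, ⟨y', hy', rfl⟩, rfl⟩
    dsimp only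
    have E2 : star (f y') (fR h z)
        = sSup ((fun b => star (f y') b) '' (h '' Set.Ici z)) :=
      sSup_map _ (hsm2 _) (cont_right hstarc _) ⟨h z, z, by simp, rfl⟩
    rw [E2]
    apply sSup_le
    rintro _ ⟨_, ⟨z', hz', rfl⟩, rfl⟩
    exact le_sSup ⟨y', z', le_trans hge (le_trans (hom1 z hy') (hom2 y' hz')), rfl⟩

lemma forward (hstar : IsTnorm star) (hstarc : IsCont star)
    (hoc : IsCont op) (hocomm : ∀ x y : I, op x y = op y x)
    (hoassoc : ∀ x y z : I, op (op x y) z = op x (op y z))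
    (hom1 : ∀ y : I, Monotone fun x => op x y) (hom2 : ∀ x : I, Monotone fun y => op x y)
    (e : I) (hue : ∀ x : I, op x e = x) :
    (∀ f g, InL f → InL g → InL (conv star op f g)) ∧
    (∀ f g, InL f → InL g → conv star op f g = conv star op g f) ∧
    (∀ f g h, InL f → InL g → InL h →
      conv star op (conv star op f g) h = conv star op f (conv star op g h)) ∧
    (∀ f, InL f → conv star op f (chi e) = f) ∧
    (∀ f g h, InL f → InL g → InL h → sqle g h →
      sqle (conv star op f g) (conv star op f h)) := by
  obtain ⟨hsc, hsa, hsm1, hsm2, hsu1, hsu2⟩ := hstar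
  have hs0 : ∀ a : I, star a 0 = 0 := fun a =>
    le_antisymm (le_trans (hsm1 0 (I_le_one a)) (le_of_eq (hsu1 0))) (I_nonneg _)
  have hs11 : star 1 1 = 1 := hsu1 1
  refine ⟨?_, ?_, ?_, ?_, ?_⟩
  · intro f g hf hg
    exact ⟨conv_normal hsm1 hsm2 hstarc hs11 hf.1 hg.1,
      conv_convex hsm1 hsm2 hoc hue hf.2 hg.2⟩
  · intro f g _ _
    exact conv_comm hsc hocomm f g
  · intro f g h _ _ _
    exact conv_assoc hsa hsm1 hsm2 hstarc hoassoc hue f g h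
  · intro f _
    exact conv_chi hsu2 hs0 hue f
  · intro f g h hf hg hh hgh
    exact conv_sqle_mono hsm1 hsm2 hstarc hs11 hoc hom1 hom2 hue f g h hf hg hh hgh

lemma chi_InL (e : I) : InL (chi e) := by
  constructor
  · exact le_antisymm (sSup_le fun a _ => I_le_one a) (le_sSup ⟨e, by simp [chi]⟩)
  · intro x y z hxy hyz
    by_cases hx : x = e
    · by_cases hz : z = e
      · have hy : y = e := le_antisymm (hz ▸ hyz) (hx ▸ hxy)
        rw [show chi e y = 1 by simp [chi, hy]]
        exact I_le_one _
      · refine le_trans (min_le_right _ _) ?_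
        rw [show chi e z = 0 by simp [chi, hz]]
        exact I_nonneg _
    · refine le_trans (min_le_left _ _) ?_
      rw [show chi e x = 0 by simp [chi, hx]]
      exact I_nonneg _

lemma conv_eval_one (hle : ∀ y z : I, op y z ≤ y ∧ op y z ≤ z) (h11 : op 1 1 = 1)
    (f g : I → I) : conv star op f g 1 = star (f 1) (g 1) := by
  apply le_antisymm
  · apply conv_le
    intro y z hyz
    have hy : y = 1 := le_antisymm (I_le_one y) (by rw [← hyz]; exact (hle y z).1)
    have hz : z = 1 := le_antisymm (I_le_one z) (by rw [← hyz]; exact (hle y z).2)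
    rw [hy, hz]
  · exact le_conv h11

lemma conv_eval_zero (hge : ∀ y z : I, y ≤ op y z ∧ z ≤ op y z) (h00 : op 0 0 = 0)
    (f g : I → I) : conv star op f g 0 = star (f 0) (g 0) := by
  apply le_antisymm
  · apply conv_le
    intro y z hyz
    have hy : y = 0 := le_antisymm (by rw [← hyz]; exact (hge y z).1) (I_nonneg y)
    have hz : z = 0 := le_antisymm (by rw [← hyz]; exact (hge y z).2) (I_nonneg z)
    rw [hy, hz]
  · exact le_conv h00

lemma Vfn_zero (a : I) : Vfn a 0 = 1 := by
  apply Subtype.ext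
  show (a.1 - 1) * ((0:I):ℝ) + 1 = 1
  norm_num

lemma Vfn_one (a : I) : Vfn a 1 = a := by
  apply Subtype.ext
  show (a.1 - 1) * ((1:I):ℝ) + 1 = a.1
  norm_num

lemma Vfn_anti (a : I) : Antitone (Vfn a) := by
  intro s t hst
  show (a.1 - 1) * t.1 + 1 ≤ (a.1 - 1) * s.1 + 1
  have h1 : a.1 ≤ 1 := a.2.2
  have h2 : s.1 ≤ t.1 := hst
  nlinarith

lemma Vfn_mono_arg {a b : I} (h : a ≤ b) (t : I) : Vfn a t ≤ Vfn b t := by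
  show (a.1 - 1) * t.1 + 1 ≤ (b.1 - 1) * t.1 + 1
  have h1 : a.1 ≤ b.1 := h
  have h2 : (0:ℝ) ≤ t.1 := t.2.1
  nlinarith

lemma Vfn_InL (a : I) : InL (Vfn a) := by
  constructor
  · exact le_antisymm (sSup_le fun x _ => I_le_one x) (le_sSup ⟨0, Vfn_zero a⟩)
  · intro x y z _ hyz
    exact le_trans (min_le_right _ _) (Vfn_anti a hyz)

lemma fL_Vfn (a : I) (x : I) : fL (Vfn a) x = 1 := by
  apply le_antisymm (I_le_one _)
  exact le_sSup ⟨0, I_nonneg x, Vfn_zero a⟩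

lemma fR_Vfn (a : I) (x : I) : fR (Vfn a) x = Vfn a x := by
  apply le_antisymm
  · apply sSup_le
    rintro _ ⟨y, hy, rfl⟩
    exact Vfn_anti a hy
  · exact le_fR _ le_rfl

lemma sqle_Vfn {a b : I} (h : a ≤ b) : sqle (Vfn a) (Vfn b) := by
  apply (sqle_iff _ _ (Vfn_InL a).2 (Vfn_InL a).1).mpr
  constructor
  · intro x; rw [fL_Vfn, fL_Vfn]
  · intro x; rw [fR_Vfn, fR_Vfn]; exact Vfn_mono_arg h x

def Wfn (a : I) : I → I := fun t =>
  ⟨(1 - a.1) * t.1 + a.1, by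
    obtain ⟨ha0, ha1⟩ := a.2; obtain ⟨ht0, ht1⟩ := t.2
    constructor <;> nlinarith⟩

lemma Wfn_zero (a : I) : Wfn a 0 = a := by
  apply Subtype.ext
  show (1 - a.1) * ((0:I):ℝ) + a.1 = a.1
  norm_num

lemma Wfn_one (a : I) : Wfn a 1 = 1 := by
  apply Subtype.ext
  show (1 - a.1) * ((1:I):ℝ) + a.1 = 1
  norm_num

lemma Wfn_mono (a : I) : Monotone (Wfn a) := by
  intro s t hst
  show (1 - a.1) * s.1 + a.1 ≤ (1 - a.1) * t.1 + a.1
  have h1 : a.1 ≤ 1 := a.2.2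
  have h2 : s.1 ≤ t.1 := hst
  nlinarith

lemma Wfn_mono_arg {a b : I} (h : a ≤ b) (t : I) : Wfn a t ≤ Wfn b t := by
  show (1 - a.1) * t.1 + a.1 ≤ (1 - b.1) * t.1 + b.1
  have h1 : a.1 ≤ b.1 := h
  have h2 : t.1 ≤ 1 := t.2.2
  nlinarith

lemma Wfn_InL (a : I) : InL (Wfn a) := by
  constructor
  · exact le_antisymm (sSup_le fun x _ => I_le_one x) (le_sSup ⟨1, Wfn_one a⟩)
  · intro x y z hxy _
    exact le_trans (min_le_left _ _) (Wfn_mono a hxy)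

lemma fL_Wfn (a : I) (x : I) : fL (Wfn a) x = Wfn a x := by
  apply le_antisymm
  · apply sSup_le
    rintro _ ⟨y, hy, rfl⟩
    exact Wfn_mono a hy
  · exact le_fL _ le_rfl

lemma fR_Wfn (a : I) (x : I) : fR (Wfn a) x = 1 := by
  apply le_antisymm (I_le_one _)
  exact le_sSup ⟨1, I_le_one x, Wfn_one a⟩

lemma sqle_Wfn {a b : I} (h : a ≤ b) : sqle (Wfn b) (Wfn a) := by
  apply (sqle_iff _ _ (Wfn_InL b).2 (Wfn_InL b).1).mpr
  constructor
  · intro x; rw [fL_Wfn, fL_Wfn]; exact Wfn_mono_arg h x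
  · intro x; rw [fR_Wfn, fR_Wfn]

lemma fR_at_one (F : I → I) : fR F 1 = F 1 := by
  apply le_antisymm
  · apply sSup_le
    rintro _ ⟨y, hy, rfl⟩
    have : y = 1 := le_antisymm (I_le_one y) hy
    rw [this]
  · exact le_fR _ le_rfl

lemma fL_at_zero (F : I → I) : fL F 0 = F 0 := by
  apply le_antisymm
  · apply sSup_le
    rintro _ ⟨y, hy, rfl⟩
    have : y = 0 := le_antisymm hy (I_nonneg y)
    rw [this]
  · exact le_fL _ le_rfl

lemma tnorm_of_onL_tri {tri : I → I → I} (htri : IsTnorm tri)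
    (H : IsTnormOnL (conv star tri)) : IsTnorm star := by
  obtain ⟨htc, hta, htm1, htm2, htu1, htu2⟩ := htri
  obtain ⟨Hcl, Hcomm, Hassoc, Hunit, Hmono⟩ := H
  have hle : ∀ y z : I, tri y z ≤ y ∧ tri y z ≤ z := fun y z =>
    ⟨le_trans (htm2 y (I_le_one z)) (le_of_eq (htu2 y)),
     le_trans (htm1 z (I_le_one y)) (le_of_eq (htu1 z))⟩
  have h11 : tri 1 1 = 1 := htu1 1
  have heval : ∀ f g : I → I, conv star tri f g 1 = star (f 1) (g 1) := fun f g =>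
    conv_eval_one hle h11 f g
  have hu2 : ∀ a : I, star a 1 = a := by
    intro a
    have h := congrFun (Hunit (Vfn a) (Vfn_InL a)) 1
    rw [heval, Vfn_one, show chi 1 1 = 1 by simp [chi]] at h
    exact h
  have hcomm : ∀ a b : I, star a b = star b a := by
    intro a b
    have h := congrFun (Hcomm (Vfn a) (Vfn b) (Vfn_InL a) (Vfn_InL b)) 1
    rwa [heval, heval, Vfn_one, Vfn_one] at h
  have hassoc : ∀ a b c : I, star (star a b) c = star a (star b c) := by
    intro a b c
    have h := congrFun (Hassoc (Vfn a) (Vfn b) (Vfn c)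
      (Vfn_InL a) (Vfn_InL b) (Vfn_InL c)) 1
    rwa [heval, heval, heval, heval, Vfn_one, Vfn_one, Vfn_one] at h
  have hmono2 : ∀ a : I, Monotone fun b => star a b := by
    intro a b b' hbb'
    have hs := Hmono (Vfn a) (Vfn b) (Vfn b') (Vfn_InL a) (Vfn_InL b) (Vfn_InL b')
      (sqle_Vfn hbb')
    have hF := Hcl (Vfn a) (Vfn b) (Vfn_InL a) (Vfn_InL b)
    have h2 := ((sqle_iff _ _ hF.2 hF.1).mp hs).2 1
    rw [fR_at_one, fR_at_one, heval, heval, Vfn_one, Vfn_one, Vfn_one] at h2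
    exact h2
  refine ⟨hcomm, hassoc, ?_, hmono2, fun x => by rw [hcomm]; exact hu2 x, hu2⟩
  intro c a a' haa'
  show star a c ≤ star a' c
  rw [hcomm a c, hcomm a' c]
  exact hmono2 c haa'

lemma tnorm_of_onL_dis {dis : I → I → I}
    (hdc : ∀ x y : I, dis x y = dis y x)
    (hdm1 : ∀ y : I, Monotone fun x => dis x y)
    (hdm2 : ∀ x : I, Monotone fun y => dis x y)
    (hdu1 : ∀ x : I, dis 0 x = x) (hdu2 : ∀ x : I, dis x 0 = x)
    (H : IsTconormOnL (conv star dis)) : IsTnorm star := by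
  obtain ⟨Hcl, Hcomm, Hassoc, Hunit, Hmono⟩ := H
  have hge : ∀ y z : I, y ≤ dis y z ∧ z ≤ dis y z := fun y z =>
    ⟨le_trans (le_of_eq (hdu2 y).symm) (hdm2 y (I_nonneg z)),
     le_trans (le_of_eq (hdu1 z).symm) (hdm1 z (I_nonneg y))⟩
  have h00 : dis 0 0 = 0 := hdu1 0
  have heval : ∀ f g : I → I, conv star dis f g 0 = star (f 0) (g 0) := fun f g =>
    conv_eval_zero hge h00 f g
  have hu2 : ∀ a : I, star a 1 = a := by
    intro a
    have h := congrFun (Hunit (Wfn a) (Wfn_InL a)) 0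
    rw [heval, Wfn_zero, show chi 0 0 = 1 by simp [chi]] at h
    exact h
  have hcomm : ∀ a b : I, star a b = star b a := by
    intro a b
    have h := congrFun (Hcomm (Wfn a) (Wfn b) (Wfn_InL a) (Wfn_InL b)) 0
    rwa [heval, heval, Wfn_zero, Wfn_zero] at h
  have hassoc : ∀ a b c : I, star (star a b) c = star a (star b c) := by
    intro a b c
    have h := congrFun (Hassoc (Wfn a) (Wfn b) (Wfn c)
      (Wfn_InL a) (Wfn_InL b) (Wfn_InL c)) 0
    rwa [heval, heval, heval, heval, Wfn_zero, Wfn_zero, Wfn_zero] at h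
  have hmono2 : ∀ a : I, Monotone fun b => star a b := by
    intro a b b' hbb'
    have hs := Hmono (Wfn a) (Wfn b') (Wfn b) (Wfn_InL a) (Wfn_InL b') (Wfn_InL b)
      (sqle_Wfn hbb')
    have hF := Hcl (Wfn a) (Wfn b') (Wfn_InL a) (Wfn_InL b')
    have h2 := ((sqle_iff _ _ hF.2 hF.1).mp hs).1 0
    rw [fL_at_zero, fL_at_zero, heval, heval, Wfn_zero, Wfn_zero, Wfn_zero] at h2
    exact h2
  refine ⟨hcomm, hassoc, ?_, hmono2, fun x => by rw [hcomm]; exact hu2 x, hu2⟩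
  intro c a a' haa'
  show star a c ≤ star a' c
  rw [hcomm a c, hcomm a' c]
  exact hmono2 c haa'

end AuxProofs

theorem stmt_11 (star tri dis : I → I → I)
    (htri : IsTnorm tri) (htric : IsCont tri)
    (hdis : IsTconorm dis) (hdisc : IsCont dis)
    (hstarc : IsCont star) :
    (IsTnorm star ↔ IsTnormOnL (conv star tri)) ∧
    (IsTnorm star ↔ IsTconormOnL (conv star dis)) := by
  constructor
  · constructor
    · intro hstar
      exact forward hstar hstarc htric htri.1 htri.2.1 htri.2.2.1 htri.2.2.2.1
        1 htri.2.2.2.2.2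
    · exact tnorm_of_onL_tri htri
  · constructor
    · intro hstar
      exact forward hstar hstarc hdisc hdis.1 hdis.2.1 hdis.2.2.1 hdis.2.2.2.1
        0 hdis.2.2.2.2.2
    · exact tnorm_of_onL_dis hdis.1 hdis.2.2.1 hdis.2.2.2.1 hdis.2.2.2.2.1 hdis.2.2.2.2.2
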